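/- arXiv:1710.03848 — 3 statements merged into one kernel-verified Lean document; each statement's English description precedes it below -/
import Mathlib

section
/- Assume S_F ≠ ∅, that the closure of A_F is a fixed point of the Barnsley–Hutchinson operator, i.e., B_F(cl A_F) = cl A_F, and that this fixed point is Lyapunov stable: for every open set V ⊇ cl A_F there is an open set V_0 ⊇ cl A_F with B_F^n(V_0) ⊆ V for every n ≥ 0. Then for every point z = (ϑ, x) ∈ Σ_k × M such that the forward orbit {σ^n(ϑ) : n ≥ 0} is dense in Σ_k, the ω-limit set ω_F(z) equals the closure of graph ρ. -/
open Set Function Filter Topology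

noncomputable section

/-- The shift map on two-sided sequences. -/
def shiftMap {k : ℕ} (θ : ℤ → Fin k) : ℤ → Fin k := fun i => θ (i + 1)

/-- The step skew product `F(θ, x) = (σ θ, f_{θ₀} x)`. -/
def skewProd {k : ℕ} {M : Type*} (f : Fin k → M → M) :
    (ℤ → Fin k) × M → (ℤ → Fin k) × M :=
  fun p => (shiftMap p.1, f (p.1 0) p.2)

/-- Backward composition `f_{θ₋₁} ∘ ⋯ ∘ f_{θ₋ₙ}`. -/
def bcomp {k : ℕ} {M : Type*} (f : Fin k → M → M) (θ : ℤ → Fin k) : ℕ → M → M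
  | 0 => id
  | n + 1 => bcomp f θ n ∘ f (θ (-((n : ℤ) + 1)))

/-- The spine `I_θ = ⋂_{n ≥ 1} f_{θ₋₁} ∘ ⋯ ∘ f_{θ₋ₙ}(M)`. -/
def spine {k : ℕ} {M : Type*} (f : Fin k → M → M) (θ : ℤ → Fin k) : Set M :=
  ⋂ n : ℕ, bcomp f θ (n + 1) '' Set.univ

/-- The set of weakly hyperbolic sequences: those `θ` whose spine is a singleton. -/
def weakHyp {k : ℕ} {M : Type*} (f : Fin k → M → M) : Set (ℤ → Fin k) :=
  {θ | ∃ x : M, spine f θ = {x}}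

/-- The ω-limit set of a point `z` under iteration of `F`: limits of subsequences
`F^{n_j}(z)` with `n_j → ∞`. -/
def omegaLim {α : Type*} [TopologicalSpace α] (F : α → α) (z : α) : Set α :=
  {w | ∃ φ : ℕ → ℕ, StrictMono φ ∧ Tendsto (fun j => F^[φ j] z) atTop (𝓝 w)}


/-- The Barnsley–Hutchinson operator `B_F(A) = ⋃ᵢ fᵢ(A)`. -/
def bhOp {k : ℕ} {M : Type*} (f : Fin k → M → M) (A : Set M) : Set M :=
  ⋃ i : Fin k, f i '' A

section Helpers
variable {k : ℕ} {M : Type*}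

lemma shift_iterate (θ : ℤ → Fin k) : ∀ (n : ℕ) (i : ℤ), shiftMap^[n] θ i = θ (i + n)
  | 0, i => by simp
  | n + 1, i => by
    rw [Function.iterate_succ_apply, shift_iterate (shiftMap θ) n i]
    simp only [shiftMap]
    congr 1
    push_cast
    ring

variable (f : Fin k → M → M)

lemma bcomp_zero (θ : ℤ → Fin k) : bcomp f θ 0 = id := rfl
lemma bcomp_succ (θ : ℤ → Fin k) (n : ℕ) :
    bcomp f θ (n + 1) = bcomp f θ n ∘ f (θ (-((n : ℤ) + 1))) := rfl

lemma bcomp_congr : ∀ (n : ℕ) {θ₁ θ₂ : ℤ → Fin k},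
    (∀ i : ℤ, -(n : ℤ) ≤ i → i ≤ -1 → θ₁ i = θ₂ i) → bcomp f θ₁ n = bcomp f θ₂ n
  | 0, θ₁, θ₂, _ => rfl
  | n + 1, θ₁, θ₂, h => by
    rw [bcomp_succ, bcomp_succ, bcomp_congr n (fun i h1 h2 => h i (by omega) h2),
      h (-((n : ℤ) + 1)) (by push_cast; omega) (by omega)]

lemma bcomp_continuous [TopologicalSpace M] (hf : ∀ i, Continuous (f i)) (θ : ℤ → Fin k) :
    ∀ n, Continuous (bcomp f θ n)
  | 0 => continuous_id
  | n + 1 => (bcomp_continuous hf θ n).comp (hf _)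

lemma bcomp_add (θ : ℤ → Fin k) (m : ℕ) :
    ∀ l : ℕ, bcomp f θ (m + l) = bcomp f θ m ∘ bcomp f (fun i => θ (i - m)) l
  | 0 => rfl
  | l + 1 => by
    rw [← Nat.add_assoc, bcomp_succ, bcomp_add θ m l, bcomp_succ]
    simp only [Function.comp_assoc]
    have harg : (-((l:ℤ) + 1) - (m:ℤ)) = -((m:ℤ) + (l:ℤ) + 1) := by ring
    rw [harg]
    simp [Nat.cast_add]

lemma bcomp_peel (θ : ℤ → Fin k) (n : ℕ) :
    bcomp f θ (n + 1) = f (θ (-1)) ∘ bcomp f (fun i => θ (i - 1)) n := by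
  have h := bcomp_add f θ 1 n
  rw [Nat.add_comm 1 n] at h
  rw [h]
  have : bcomp f θ 1 = f (θ (-1)) := by
    rw [bcomp_succ]; simp [bcomp_zero]
  rw [this]
  norm_num

lemma bcomp_image_antitone (θ : ℤ → Fin k) {a b : ℕ} (h : a ≤ b) :
    bcomp f θ b '' univ ⊆ bcomp f θ a '' univ := by
  obtain ⟨l, rfl⟩ := Nat.exists_eq_add_of_le h
  rw [bcomp_add]
  rintro _ ⟨w, -, rfl⟩
  exact ⟨_, mem_univ _, rfl⟩

lemma fiber_formula (p : (ℤ → Fin k) × M) :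
    ∀ n : ℕ, (skewProd f)^[n] p = (shiftMap^[n] p.1, bcomp f (shiftMap^[n] p.1) n p.2)
  | 0 => rfl
  | n + 1 => by
    rw [Function.iterate_succ_apply', fiber_formula p n]
    simp only [skewProd]
    have hsh : shiftMap (shiftMap^[n] p.1) = shiftMap^[n+1] p.1 :=
      (Function.iterate_succ_apply' shiftMap n p.1).symm
    rw [hsh]
    congr 1
    rw [bcomp_peel]
    have h1 : (fun i => shiftMap^[n+1] p.1 (i - 1)) = shiftMap^[n] p.1 := by
      funext i
      rw [shift_iterate, shift_iterate]
      congr 1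
      push_cast; ring
    have h2 : shiftMap^[n+1] p.1 (-1) = shiftMap^[n] p.1 0 := by
      rw [shift_iterate, shift_iterate]
      congr 1; push_cast; ring
    rw [h1, h2]
    rfl

end Helpers

section Helpers2
variable {k : ℕ} {M : Type*} [MetricSpace M] [CompactSpace M] [Nonempty M]
variable (f : Fin k → M → M)

lemma spine_shrink (hf : ∀ i, Continuous (f i)) (θ' : ℤ → Fin k) {p : M}
    (hsp : spine f θ' = {p}) {U : Set M} (hU : IsOpen U) (hp : p ∈ U) :
    ∃ m : ℕ, bcomp f θ' (m + 1) '' univ ⊆ U := by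
  set K : ℕ → Set M := fun n => bcomp f θ' (n + 1) '' univ with hKdef
  have hcpt : ∀ n, IsCompact (K n) := fun n =>
    isCompact_univ.image (bcomp_continuous f hf θ' (n + 1))
  have hanti : ∀ {a b : ℕ}, a ≤ b → K b ⊆ K a := fun {a b} h =>
    bcomp_image_antitone f θ' (by omega)
  have hempty : K 0 ∩ ⋂ n, (K n ∩ Uᶜ) = ∅ := by
    apply Set.eq_empty_of_subset_empty
    intro w hw
    have h1 : w ∈ spine f θ' := by
      rw [spine]
      exact Set.mem_iInter.mpr fun n => (Set.mem_iInter.mp hw.2 n).1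
    rw [hsp] at h1
    exact (Set.mem_iInter.mp hw.2 0).2 (h1 ▸ hp)
  obtain ⟨u, hu⟩ := (hcpt 0).elim_finite_subfamily_closed (fun n => K n ∩ Uᶜ)
    (fun n => ((hcpt n).isClosed.inter hU.isClosed_compl)) hempty
  refine ⟨u.sup id, fun w hw => ?_⟩
  by_contra hwU
  have h0 : w ∈ K 0 := hanti (Nat.zero_le _) hw
  have : w ∈ K 0 ∩ ⋂ n ∈ u, (K n ∩ Uᶜ) := by
    refine ⟨h0, Set.mem_iInter₂.mpr fun n hn => ⟨hanti ?_ hw, hwU⟩⟩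
    exact Finset.le_sup (f := id) hn
  rw [hu] at this
  exact this

lemma bcomp_mem_bhOp_iterate (θ : ℤ → Fin k) :
    ∀ (l : ℕ) {s : Set M} {w : M}, w ∈ s → bcomp f θ l w ∈ (bhOp f)^[l] s
  | 0, s, w, hw => hw
  | l + 1, s, w, hw => by
    rw [bcomp_succ, Function.iterate_succ_apply]
    exact bcomp_mem_bhOp_iterate θ l
      (Set.mem_iUnion.mpr ⟨θ (-((l : ℤ) + 1)), Set.mem_image_of_mem _ hw⟩)

/-- gluing: `η` on `[-m, ∞)`, `ζ` (shifted) on `(-∞, -m)`. -/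
def glue (η ζ : ℤ → Fin k) (m : ℕ) : ℤ → Fin k :=
  fun i => if -(m : ℤ) ≤ i then η i else ζ (i + m)

lemma glue_eq_left (η ζ : ℤ → Fin k) (m : ℕ) {i : ℤ} (h : -(m : ℤ) ≤ i) :
    glue η ζ m i = η i := if_pos h

lemma spine_glue (hf : ∀ i, Continuous (f i)) (η ζ : ℤ → Fin k) (m : ℕ) {q : M}
    (hζ : spine f ζ = {q}) :
    spine f (glue η ζ m) = {bcomp f η m q} := by
  have hbm : bcomp f (glue η ζ m) m = bcomp f η m :=
    bcomp_congr f m fun i h1 h2 => glue_eq_left η ζ m (by omega)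
  have hshift : ∀ l : ℕ, bcomp f (fun i => (glue η ζ m) (i - m)) l = bcomp f ζ l := by
    intro l
    apply bcomp_congr f
    intro i h1 h2
    have : ¬ (-(m : ℤ) ≤ i - m) := by omega
    simp only [glue, this, if_false]
    congr 1
    ring
  have hdecomp : ∀ l : ℕ, bcomp f (glue η ζ m) (m + l) = bcomp f η m ∘ bcomp f ζ l := by
    intro l
    rw [bcomp_add, hbm, hshift]
  have hqmem : ∀ l : ℕ, q ∈ bcomp f ζ (l + 1) '' univ := fun l => by
    have : q ∈ spine f ζ := hζ ▸ rfl
    exact Set.mem_iInter.mp this l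
  apply Set.eq_singleton_iff_unique_mem.mpr
  constructor
  · rw [spine]
    apply Set.mem_iInter.mpr
    intro n
    apply bcomp_image_antitone f (glue η ζ m) (show n + 1 ≤ m + (n + 1) by omega)
    obtain ⟨u, -, hu⟩ := hqmem n
    rw [hdecomp]
    exact ⟨u, Set.mem_univ _, by simp [Function.comp, hu]⟩
  · intro w hw
    -- w ∈ every bcomp (glue η ζ m) (n+1) '' univ; show w = bcomp f η m q
    set T : ℕ → Set M := fun l => (bcomp f ζ (l + 1) '' univ) ∩ (bcomp f η m) ⁻¹' {w}
      with hT
    have hTne : ∀ l, (T l).Nonempty := by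
      intro l
      have hw' : w ∈ bcomp f (glue η ζ m) (m + (l + 1)) '' univ := by
        have h0 := Set.mem_iInter.mp hw (m + l)
        rwa [show m + l + 1 = m + (l + 1) by omega] at h0
      rw [hdecomp] at hw'
      obtain ⟨u, -, hu⟩ := hw'
      exact ⟨bcomp f ζ (l + 1) u, ⟨u, Set.mem_univ _, rfl⟩, hu⟩
    have hTcpt : ∀ l, IsCompact (T l) :=
      fun l => ((isCompact_univ.image (bcomp_continuous f hf ζ (l + 1))).inter_right
        (isClosed_singleton.preimage (bcomp_continuous f hf η m)))
    have hTcl : ∀ l, IsClosed (T l) := fun l =>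
      ((isCompact_univ.image (bcomp_continuous f hf ζ (l + 1))).isClosed.inter
        (isClosed_singleton.preimage (bcomp_continuous f hf η m)))
    have hTdir : Directed (fun x1 x2 => x1 ⊇ x2) T := by
      intro a b
      refine ⟨max a b, Set.inter_subset_inter_left _ ?_, Set.inter_subset_inter_left _ ?_⟩
      · exact bcomp_image_antitone f ζ (by omega)
      · exact bcomp_image_antitone f ζ (by omega)
    obtain ⟨q', hq'⟩ := IsCompact.nonempty_iInter_of_directed_nonempty_isCompact_isClosed
      T hTdir hTne hTcpt hTcl
    have hq'spine : q' ∈ spine f ζ :=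
      Set.mem_iInter.mpr fun l => (Set.mem_iInter.mp hq' l).1
    rw [hζ, Set.mem_singleton_iff] at hq'spine
    have : bcomp f η m q' = w := (Set.mem_iInter.mp hq' 0).2
    rw [← this, hq'spine]

end Helpers2

section Helpers3
variable {k : ℕ}

lemma pi_nhdsWithin_neBot (hk2 : 2 ≤ k) (x : ℤ → Fin k) : (𝓝[≠] x).NeBot := by
  haveI : Nontrivial (Fin k) := Fin.nontrivial_iff_two_le.mpr hk2
  rw [← mem_closure_iff_nhdsWithin_neBot]
  have hchoice : ∀ j : ℕ, ∃ b : Fin k, b ≠ x (j : ℤ) := fun j => exists_ne _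
  choose b hb using hchoice
  set y : ℕ → (ℤ → Fin k) := fun j => Function.update x (j : ℤ) (b j) with hy
  have hyne : ∀ j, y j ∈ ({x}ᶜ : Set (ℤ → Fin k)) := by
    intro j hmem
    have : y j (j : ℤ) = x (j : ℤ) := by rw [Set.mem_singleton_iff.mp hmem]
    rw [hy] at this
    simp only [Function.update_self] at this
    exact hb j this
  have hytend : Tendsto y atTop (𝓝 x) := by
    rw [tendsto_pi_nhds]
    intro i
    have hev : ∀ᶠ j in atTop, y j i = x i := by
      filter_upwards [eventually_ge_atTop (i.natAbs + 1)] with j hj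
      have : (j : ℤ) ≠ i := by omega
      simp [hy, Function.update_of_ne this.symm]
    exact Tendsto.congr' (by filter_upwards [hev] with j h using h.symm) tendsto_const_nhds
  exact mem_closure_of_tendsto hytend (Eventually.of_forall hyne)

lemma exists_large_match (hk : 1 ≤ k) (θ η : ℤ → Fin k)
    (hdense : Dense (Set.range fun n : ℕ => shiftMap^[n] θ)) (m N : ℕ) :
    ∃ n : ℕ, N ≤ n ∧ ∀ i : ℤ, |i| ≤ (m : ℤ) → shiftMap^[n] θ i = η i := by
  rcases le_or_gt k 1 with hk1 | hk2
  · haveI : Subsingleton (Fin k) := Fin.subsingleton_iff_le_one.mpr hk1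
    exact ⟨N, le_refl N, fun i _ => Subsingleton.elim _ _⟩
  · haveI : ∀ x : ℤ → Fin k, (𝓝[≠] x).NeBot := pi_nhdsWithin_neBot hk2
    set C : Set (ℤ → Fin k) := {ϑ | ∀ i ∈ Finset.Icc (-(m : ℤ)) (m : ℤ), ϑ i = η i} with hC
    have hCopen : IsOpen C := by
      have : C = ⋂ i ∈ Finset.Icc (-(m : ℤ)) (m : ℤ), (fun ϑ : ℤ → Fin k => ϑ i) ⁻¹' {η i} := by
        ext ϑ; simp [hC]
      rw [this]
      exact isOpen_biInter_finset fun i _ =>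
        (continuous_apply i).isOpen_preimage _ (isOpen_discrete _)
    have hCne : η ∈ C := fun i _ => rfl
    have hfin : (Set.Finite ((fun n : ℕ => shiftMap^[n] θ) '' (Set.Iio N))) :=
      (Set.finite_Iio N).image _
    have hd2 : Dense ((Set.range fun n : ℕ => shiftMap^[n] θ) \
        ((fun n : ℕ => shiftMap^[n] θ) '' (Set.Iio N))) := hdense.diff_finite hfin
    obtain ⟨ϑ, hϑ, hϑC⟩ := hd2.exists_mem_open hCopen ⟨η, hCne⟩
    obtain ⟨⟨n, rfl⟩, hnot⟩ := hϑ
    refine ⟨n, ?_, fun i hi => hϑC i (Finset.mem_Icc.mpr (abs_le.mp hi))⟩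
    by_contra hlt
    exact hnot ⟨n, Set.mem_Iio.mpr (by omega), rfl⟩

end Helpers3

section Helpers4
variable {α : Type*} [TopologicalSpace α] [FirstCountableTopology α]

lemma omegaLim_eq (F : α → α) (z : α) :
    omegaLim F z = ⋂ N : ℕ, closure (Set.range fun n : ℕ => F^[n + N] z) := by
  apply Set.Subset.antisymm
  · rintro w ⟨φ, hφ, hconv⟩
    apply Set.mem_iInter.mpr
    intro N
    apply mem_closure_of_tendsto hconv
    filter_upwards [eventually_ge_atTop N] with j hj
    have hφj : N ≤ φ j := le_trans hj hφ.le_apply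
    exact ⟨φ j - N, by simp only [Nat.sub_add_cancel hφj]⟩
  · intro w hw
    obtain ⟨U, hU⟩ := (𝓝 w).exists_antitone_basis
    have hstep : ∀ (j b : ℕ), ∃ n : ℕ, F^[n + b] z ∈ U j := by
      intro j b
      have hwc := Set.mem_iInter.mp hw b
      obtain ⟨v, hv1, hv2⟩ := mem_closure_iff_nhds.mp hwc (U j) (hU.mem j)
      obtain ⟨n, rfl⟩ := hv2
      exact ⟨n, hv1⟩
    choose g hg using hstep
    set φ : ℕ → ℕ := fun j => Nat.rec (g 0 0 + 0) (fun j ih => g (j + 1) (ih + 1) + (ih + 1)) j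
      with hφdef
    have hφ0 : φ 0 = g 0 0 + 0 := rfl
    have hφs : ∀ j, φ (j + 1) = g (j + 1) (φ j + 1) + (φ j + 1) := fun j => rfl
    have hmono : StrictMono φ := strictMono_nat_of_lt_succ fun j => by
      rw [hφs]; omega
    have hmem : ∀ j, F^[φ j] z ∈ U j := by
      intro j
      cases j with
      | zero => exact hg 0 0
      | succ j => exact hg (j + 1) (φ j + 1)
    exact ⟨φ, hmono, hU.tendsto hmem⟩

lemma isClosed_omegaLim (F : α → α) (z : α) : IsClosed (omegaLim F z) := by
  rw [omegaLim_eq]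
  exact isClosed_iInter fun _ => isClosed_closure

end Helpers4

/-- If `S_F ≠ ∅` and the closure of the target set `A_F` is a Lyapunov stable fixed
point of the Barnsley–Hutchinson operator, then for every point `z = (θ, x)` whose base
forward orbit is dense, the ω-limit set of `z` equals the closure of the graph of the
coding map. -/
theorem omegaLimit_eq_closure_graph_of_lyapunovStable
    {k : ℕ} (hk : 1 ≤ k) {M : Type*} [MetricSpace M] [CompactSpace M] [Nonempty M]
    (f : Fin k → M → M) (hf : ∀ i, Continuous (f i))
    (hS : (weakHyp f).Nonempty)
    (ρ : (ℤ → Fin k) → M) (hρ : ∀ θ ∈ weakHyp f, spine f θ = {ρ θ})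
    (hfix : bhOp f (closure (ρ '' weakHyp f)) = closure (ρ '' weakHyp f))
    (hLyap : ∀ V : Set M, IsOpen V → closure (ρ '' weakHyp f) ⊆ V →
      ∃ V₀ : Set M, IsOpen V₀ ∧ closure (ρ '' weakHyp f) ⊆ V₀ ∧
        ∀ n : ℕ, (bhOp f)^[n] V₀ ⊆ V)
    (θ : ℤ → Fin k) (x : M)
    (hdense : Dense (Set.range fun n : ℕ => shiftMap^[n] θ)) :
    omegaLim (skewProd f) (θ, x) = closure ((fun ϑ => (ϑ, ρ ϑ)) '' weakHyp f) := by
  classical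
  -- Part B1: fiber eventually enters any open set containing the closure of the target set
  have hEvent : ∀ V : Set M, IsOpen V → closure (ρ '' weakHyp f) ⊆ V →
      ∀ᶠ n in atTop, ((skewProd f)^[n] (θ, x)).2 ∈ V := by
    intro V hV hKV
    obtain ⟨V₀, hV₀o, hKV₀, hiter⟩ := hLyap V hV hKV
    obtain ⟨ϑ, hϑ⟩ := hS
    have hρϑK : ρ ϑ ∈ closure (ρ '' weakHyp f) := subset_closure ⟨ϑ, hϑ, rfl⟩
    obtain ⟨m, hm⟩ := spine_shrink f hf ϑ (hρ ϑ hϑ) hV₀o (hKV₀ hρϑK)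
    obtain ⟨n₀, hn₀, hmatch⟩ := exists_large_match hk θ ϑ hdense (m + 1) (m + 1)
    have hstart : ((skewProd f)^[n₀] (θ, x)).2 ∈ V₀ := by
      rw [fiber_formula]
      apply hm
      have h1 : bcomp f (shiftMap^[n₀] θ) n₀ x ∈ bcomp f (shiftMap^[n₀] θ) (m + 1) '' univ :=
        bcomp_image_antitone f _ hn₀ ⟨x, Set.mem_univ _, rfl⟩
      rwa [bcomp_congr f (m + 1)
        (fun i hi1 hi2 => hmatch i (abs_le.mpr ⟨hi1, by omega⟩))] at h1
    filter_upwards [eventually_ge_atTop n₀] with n hn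
    obtain ⟨l, rfl⟩ := Nat.exists_eq_add_of_le hn
    rw [Nat.add_comm, Function.iterate_add_apply, fiber_formula]
    exact hiter l (bcomp_mem_bhOp_iterate f _ l hstart)
  apply Set.Subset.antisymm
  · -- ω-limit ⊆ closure of graph
    rintro ⟨η, y⟩ ⟨φ, hφmono, hconv⟩
    have hbase : Tendsto (fun j => shiftMap^[φ j] θ) atTop (𝓝 η) := by
      have h1 : Tendsto (fun j => ((skewProd f)^[φ j] (θ, x)).1) atTop (𝓝 η) :=
        (continuous_fst.tendsto _).comp hconv
      simpa only [Function.comp_def, fiber_formula] using h1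
    have hfib : Tendsto (fun j => bcomp f (shiftMap^[φ j] θ) (φ j) x) atTop (𝓝 y) := by
      have h1 : Tendsto (fun j => ((skewProd f)^[φ j] (θ, x)).2) atTop (𝓝 y) :=
        (continuous_snd.tendsto _).comp hconv
      simpa only [Function.comp_def, fiber_formula] using h1
    have hcoord : ∀ i : ℤ, ∀ᶠ j in atTop, shiftMap^[φ j] θ i = η i := by
      intro i
      have h1 := tendsto_pi_nhds.mp hbase i
      have h2 : (𝓝 (η i)) = pure (η i) := by rw [nhds_discrete]
      rw [h2, tendsto_pure] at h1
      exact h1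
    have hkey : ∀ m : ℕ, y ∈ bcomp f η m '' closure (ρ '' weakHyp f) := by
      intro m
      have hwin : ∀ᶠ j in atTop, ∀ i ∈ Finset.Icc (-(m : ℤ)) (-1 : ℤ),
          shiftMap^[φ j] θ i = η i :=
        (eventually_all_finset _).mpr fun i _ => hcoord i
      have hdecomp : ∀ᶠ j in atTop, ((skewProd f)^[φ j] (θ, x)).2 =
          bcomp f η m (((skewProd f)^[φ j - m] (θ, x)).2) := by
        filter_upwards [hwin, eventually_ge_atTop m] with j hj hjm
        have hφjm : m ≤ φ j := le_trans hjm hφmono.le_apply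
        have hsplit : (skewProd f)^[φ j] (θ, x) =
            (skewProd f)^[m] ((skewProd f)^[φ j - m] (θ, x)) := by
          rw [← Function.iterate_add_apply, Nat.add_sub_cancel' hφjm]
        rw [hsplit, fiber_formula]
        have hp1 : ((skewProd f)^[φ j - m] (θ, x)).1 = shiftMap^[φ j - m] θ := by
          rw [fiber_formula]
        rw [hp1, ← Function.iterate_add_apply, Nat.add_sub_cancel' hφjm,
          bcomp_congr f m (fun i h1 h2 => hj i (Finset.mem_Icc.mpr ⟨h1, h2⟩))]
      have hthick : ∀ ε : ℝ, 0 < ε → ∀ᶠ j in atTop,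
          ((skewProd f)^[φ j - m] (θ, x)).2 ∈ Metric.thickening ε (closure (ρ '' weakHyp f)) := by
        intro ε hε
        have hev := hEvent (Metric.thickening ε (closure (ρ '' weakHyp f)))
          Metric.isOpen_thickening (Metric.self_subset_thickening hε _)
        have htend : Tendsto (fun j => φ j - m) atTop atTop := by
          apply tendsto_atTop_atTop.mpr
          intro b
          refine ⟨b + m, fun j hj => ?_⟩
          have := hφmono.le_apply (x := j)
          omega
        exact htend.eventually hev
      obtain ⟨p, -, ψ, hψmono, hψtend⟩ := isCompact_univ.tendsto_subseq
        (x := fun j => ((skewProd f)^[φ j - m] (θ, x)).2) (fun j => Set.mem_univ _)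
      have hψatTop : Tendsto ψ atTop atTop := hψmono.tendsto_atTop
      have hpK : p ∈ closure (ρ '' weakHyp f) := by
        have hcth : ∀ ε : ℝ, 0 < ε → p ∈ Metric.cthickening ε (ρ '' weakHyp f) := by
          intro ε hε
          have h1 : p ∈ closure (Metric.thickening ε (closure (ρ '' weakHyp f))) :=
            mem_closure_of_tendsto hψtend (hψatTop.eventually (hthick ε hε))
          have h2 := closure_minimal
            (Metric.thickening_subset_cthickening ε (closure (ρ '' weakHyp f)))
            Metric.isClosed_cthickening h1
          rwa [Metric.cthickening_closure] at h2
        rw [Metric.closure_eq_iInter_cthickening (ρ '' weakHyp f)]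
        exact Set.mem_iInter₂.mpr fun ε hε => hcth ε hε
      refine ⟨p, hpK, ?_⟩
      have h1 : Tendsto (fun l => bcomp f η m (((skewProd f)^[φ (ψ l) - m] (θ, x)).2))
          atTop (𝓝 (bcomp f η m p)) :=
        ((bcomp_continuous f hf η m).tendsto p).comp hψtend
      have h2 : Tendsto (fun l => bcomp f η m (((skewProd f)^[φ (ψ l) - m] (θ, x)).2))
          atTop (𝓝 y) := by
        apply Tendsto.congr' _ (hfib.comp hψatTop)
        filter_upwards [hψatTop.eventually hdecomp] with l hl
        rw [fiber_formula] at hl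
        exact hl
      exact tendsto_nhds_unique h1 h2
    have happrox : ∀ m : ℕ, ∃ ζ, ζ ∈ weakHyp f ∧
        dist (bcomp f η m (ρ ζ)) y < 1 / ((m : ℝ) + 1) := by
      intro m
      obtain ⟨p, hpK, hpy⟩ := hkey m
      have hpos : (0 : ℝ) < 1 / ((m : ℝ) + 1) := by positivity
      have hopen : IsOpen ((bcomp f η m) ⁻¹' Metric.ball y (1 / ((m : ℝ) + 1))) :=
        Metric.isOpen_ball.preimage (bcomp_continuous f hf η m)
      have hpmem : p ∈ (bcomp f η m) ⁻¹' Metric.ball y (1 / ((m : ℝ) + 1)) := by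
        simp only [Set.mem_preimage, hpy]
        exact Metric.mem_ball_self hpos
      obtain ⟨v, hvU, hvA⟩ := _root_.mem_closure_iff.mp hpK _ hopen hpmem
      obtain ⟨ζ, hζ, rfl⟩ := hvA
      exact ⟨ζ, hζ, Metric.mem_ball.mp hvU⟩
    choose ζ hζwh hζd using happrox
    have hspineΘ : ∀ m : ℕ, spine f (glue η (ζ m) m) = {bcomp f η m (ρ (ζ m))} :=
      fun m => spine_glue f hf η (ζ m) m (hρ (ζ m) (hζwh m))
    have hΘwh : ∀ m, glue η (ζ m) m ∈ weakHyp f := fun m => ⟨_, hspineΘ m⟩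
    have hρΘ : ∀ m, ρ (glue η (ζ m) m) = bcomp f η m (ρ (ζ m)) := by
      intro m
      have h1 := hρ _ (hΘwh m)
      rw [hspineΘ m] at h1
      exact (Set.singleton_eq_singleton_iff.mp h1).symm
    have htendΘ : Tendsto (fun m => (glue η (ζ m) m, ρ (glue η (ζ m) m)))
        atTop (𝓝 (η, y)) := by
      apply Tendsto.prodMk_nhds
      · rw [tendsto_pi_nhds]
        intro i
        have hev : ∀ᶠ m in atTop, glue η (ζ m) m i = η i := by
          filter_upwards [eventually_ge_atTop i.natAbs] with m hm
          apply glue_eq_left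
          have h3 : -(|i|) ≤ i := neg_abs_le i
          rw [Int.abs_eq_natAbs] at h3
          omega
        have h2 : (𝓝 (η i)) = pure (η i) := by rw [nhds_discrete]
        rw [h2, tendsto_pure]
        exact hev
      · simp only [hρΘ]
        rw [tendsto_iff_dist_tendsto_zero]
        exact squeeze_zero (fun m => dist_nonneg) (fun m => le_of_lt (hζd m))
          tendsto_one_div_add_atTop_nhds_zero_nat
    exact mem_closure_of_tendsto htendΘ
      (Eventually.of_forall fun m => ⟨glue η (ζ m) m, hΘwh m, rfl⟩)
  · -- closure of graph ⊆ ω-limit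
    apply closure_minimal _ (isClosed_omegaLim _ _)
    rintro _ ⟨θ', hθ', rfl⟩
    have hsp := hρ θ' hθ'
    have hex : ∀ (j N : ℕ), ∃ n : ℕ, N ≤ n ∧ ∀ i : ℤ, |i| ≤ ((j + 1 : ℕ) : ℤ) →
        shiftMap^[n] θ i = θ' i := fun j N => exists_large_match hk θ θ' hdense (j + 1) N
    choose g hg1 hg2 using hex
    set φ : ℕ → ℕ :=
      fun j => Nat.rec (g 0 1) (fun j ih => g (j + 1) (max (ih + 1) (j + 2))) j with hφdef
    have hφs : ∀ j, φ (j + 1) = g (j + 1) (max (φ j + 1) (j + 2)) := fun j => rfl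
    have hmono : StrictMono φ := strictMono_nat_of_lt_succ fun j => by
      calc φ j < φ j + 1 := Nat.lt_succ_self _
        _ ≤ max (φ j + 1) (j + 2) := le_max_left _ _
        _ ≤ g (j + 1) (max (φ j + 1) (j + 2)) := hg1 _ _
        _ = φ (j + 1) := (hφs j).symm
    have hφge : ∀ j, j + 1 ≤ φ j := by
      intro j
      cases j with
      | zero => exact hg1 0 1
      | succ j =>
        rw [hφs]
        calc j + 1 + 1 ≤ max (φ j + 1) (j + 2) := le_max_right _ _
          _ ≤ g (j + 1) (max (φ j + 1) (j + 2)) := hg1 _ _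
    have hmatch : ∀ j, ∀ i : ℤ, |i| ≤ ((j + 1 : ℕ) : ℤ) → shiftMap^[φ j] θ i = θ' i := by
      intro j
      cases j with
      | zero => exact hg2 0 1
      | succ j => exact hg2 (j + 1) (max (φ j + 1) (j + 2))
    refine ⟨φ, hmono, ?_⟩
    have hform : (fun j => (skewProd f)^[φ j] (θ, x)) = fun j =>
        (shiftMap^[φ j] θ, bcomp f (shiftMap^[φ j] θ) (φ j) x) :=
      funext fun j => fiber_formula f _ _
    rw [hform]
    apply Tendsto.prodMk_nhds
    · rw [tendsto_pi_nhds]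
      intro i
      have hev : ∀ᶠ j in atTop, shiftMap^[φ j] θ i = θ' i := by
        filter_upwards [eventually_ge_atTop i.natAbs] with j hj
        apply hmatch j i
        rw [Int.abs_eq_natAbs]
        omega
      have h2 : (𝓝 (θ' i)) = pure (θ' i) := by rw [nhds_discrete]
      rw [h2, tendsto_pure]
      exact hev
    · rw [Metric.tendsto_atTop]
      intro ε hε
      obtain ⟨m, hm⟩ := spine_shrink f hf θ' hsp Metric.isOpen_ball (Metric.mem_ball_self hε)
      refine ⟨m, fun j hj => ?_⟩
      have h1 : bcomp f (shiftMap^[φ j] θ) (φ j) x ∈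
          bcomp f (shiftMap^[φ j] θ) (j + 1) '' univ :=
        bcomp_image_antitone f _ (hφge j) ⟨x, Set.mem_univ _, rfl⟩
      rw [bcomp_congr f (j + 1)
        (fun i hi1 hi2 => hmatch j i (abs_le.mpr ⟨hi1, by omega⟩))] at h1
      have h2 : bcomp f θ' (j + 1) '' univ ⊆ bcomp f θ' (m + 1) '' univ :=
        bcomp_image_antitone f θ' (by omega)
      have h3 := hm (h2 h1)
      rwa [Metric.mem_ball] at h3
end
end

section
/- Assume S_F ≠ ∅. Then F is topologically mixing on the closure of graph ρ: for every pair of nonempty relatively open subsets U and V of cl(graph ρ) there exists n_0 such that F^n(V) ∩ U ≠ ∅ for all n ≥ n_0. -/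
open Set Function Filter Topology

noncomputable section

/-
Given graph points (θ, ρθ) ∈ V and (η, ρη) ∈ U, splice the past of θ with a copy of η shifted
n steps into the future. The spliced sequence has the past of θ, hence the spine {ρθ}, and tends
to θ; its n-th shift tends to η. The graph of ρ is F-invariant, and ρ is continuous on S_F: the
spine of a sequence lies in the compact set f_{θ₋₁} ∘ ⋯ ∘ f_{θ₋ₘ}(M), which depends only on its
last m symbols, and these sets shrink to the spine. Hence Fⁿ of the spliced graph point tends
to (η, ρη), so it lies in U for all large n.
-/

theorem Antitone.image_iInter_eq_of_isCompact {X Y : Type*} [TopologicalSpace X] [T2Space X]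
    [TopologicalSpace Y] [T1Space Y] {K : ℕ → Set X} (hK : Antitone K)
    (hKc : ∀ n, IsCompact (K n)) {g : X → Y} (hg : Continuous g) :
    g '' ⋂ n, K n = ⋂ n, g '' K n := by
  refine (image_iInter_subset K g).antisymm fun y hy => ?_
  have hfiber : ∀ n, (K n ∩ g ⁻¹' {y}).Nonempty := fun n => by
    obtain ⟨x, hx, rfl⟩ := mem_iInter.1 hy n
    exact ⟨x, hx, rfl⟩
  have hclosed : ∀ n, IsClosed (K n ∩ g ⁻¹' {y}) := fun n =>
    (hKc n).isClosed.inter (isClosed_singleton.preimage hg)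
  obtain ⟨x, hx⟩ := IsCompact.nonempty_iInter_of_sequence_nonempty_isCompact_isClosed _
    (fun n => inter_subset_inter_left _ (hK n.le_succ)) hfiber
    ((hKc 0).inter_right (isClosed_singleton.preimage hg)) hclosed
  simp only [mem_iInter, mem_inter_iff, mem_preimage, mem_singleton_iff] at hx
  exact ⟨x, mem_iInter.2 fun n => (hx n).1, (hx 0).2⟩

def IsMixingOn {α : Type*} [TopologicalSpace α] (T : α → α) (s : Set α) : Prop :=
  ∀ U V : Set α, IsOpen U → IsOpen V → (U ∩ s).Nonempty → (V ∩ s).Nonempty →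
    ∀ᶠ n in atTop, (T^[n] '' (V ∩ s) ∩ (U ∩ s)).Nonempty

lemma IsMixingOn.closure {α : Type*} [TopologicalSpace α] {T : α → α} {s : Set α}
    (h : IsMixingOn T s) : IsMixingOn T (_root_.closure s) := by
  intro U V hU hV hUs hVs
  rw [inter_comm, closure_inter_open_nonempty_iff hU, inter_comm] at hUs
  rw [inter_comm, closure_inter_open_nonempty_iff hV, inter_comm] at hVs
  exact (h U V hU hV hUs hVs).mono fun n hn => hn.mono (by gcongr <;> exact subset_closure)

-- Cutting at n/2 lets both the θ-block near 0 and the η-block near n grow without bound.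
def splice {α : Type*} (θ η : ℤ → α) (n : ℕ) : ℤ → α :=
  fun i => if 2 * i < n then θ i else η (i - n)

lemma splice_of_neg {α : Type*} (θ η : ℤ → α) (n : ℕ) {i : ℤ} (hi : i < 0) :
    splice θ η n i = θ i :=
  if_pos (by omega)

lemma tendsto_splice {α : Type*} [TopologicalSpace α] (θ η : ℤ → α) :
    Tendsto (splice θ η) atTop (𝓝 θ) :=
  tendsto_pi_nhds.2 fun i => tendsto_const_nhds.congr' <|
    ((tendsto_natCast_atTop_atTop (R := ℤ)).eventually_gt_atTop (2 * i)).mono fun _ hn =>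
      (if_pos hn).symm

lemma shiftMap_iterate_apply {k : ℕ} (θ : ℤ → Fin k) (n : ℕ) (i : ℤ) :
    shiftMap^[n] θ i = θ (i + n) := by
  induction n generalizing θ with
  | zero => simp
  | succ n ih =>
    rw [iterate_succ_apply, ih, shiftMap]
    push_cast
    ring_nf

lemma tendsto_shiftMap_iterate_splice {k : ℕ} (θ η : ℤ → Fin k) :
    Tendsto (fun n => shiftMap^[n] (splice θ η n)) atTop (𝓝 η) :=
  tendsto_pi_nhds.2 fun i => tendsto_const_nhds.congr' <|
    ((tendsto_natCast_atTop_atTop (R := ℤ)).eventually_ge_atTop (-2 * i)).mono fun n hn => by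
      dsimp only
      rw [shiftMap_iterate_apply, splice, if_neg (by omega), add_sub_cancel_right]

section Spine

variable {k : ℕ} {M : Type*} (f : Fin k → M → M)

lemma bcomp_congr_s5 {θ η : ℤ → Fin k} {m : ℕ}
    (h : ∀ j < m, θ (-((j : ℤ) + 1)) = η (-((j : ℤ) + 1))) :
    bcomp f θ m = bcomp f η m := by
  induction m with
  | zero => rfl
  | succ m ih =>
    rw [bcomp, bcomp, ih fun j hj => h j (Nat.lt_succ_of_lt hj), h m (Nat.lt_succ_self m)]

lemma bcomp_shiftMap (θ : ℤ → Fin k) (n : ℕ) :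
    bcomp f (shiftMap θ) (n + 1) = f (θ 0) ∘ bcomp f θ n := by
  induction n with
  | zero => simp [bcomp, shiftMap]
  | succ n ih =>
    rw [bcomp, ih, bcomp, comp_assoc, shiftMap]
    push_cast
    ring_nf

lemma antitone_range_bcomp (θ : ℤ → Fin k) : Antitone fun n => range (bcomp f θ n) :=
  antitone_nat_of_succ_le fun _ => range_comp_subset_range _ _

lemma spine_eq_iInter_range_bcomp_succ (θ : ℤ → Fin k) :
    spine f θ = ⋂ n, range (bcomp f θ (n + 1)) := by
  simp only [spine, image_univ]

lemma spine_eq_iInter_range_bcomp (θ : ℤ → Fin k) :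
    spine f θ = ⋂ n, range (bcomp f θ n) := by
  rw [spine_eq_iInter_range_bcomp_succ]
  refine Subset.antisymm (subset_iInter fun n => ?_) (iInter_mono' fun n => ⟨n + 1, le_rfl⟩)
  rcases n with _ | n
  · simp [bcomp]
  · exact iInter_subset _ n

lemma spine_congr {θ η : ℤ → Fin k} (h : ∀ i < 0, θ i = η i) : spine f θ = spine f η := by
  simp only [spine_eq_iInter_range_bcomp]
  exact iInter_congr fun n => by rw [bcomp_congr_s5 f fun j _ => h _ (by omega)]

lemma semiconj_fst_skewProd : Semiconj Prod.fst (skewProd f) shiftMap := fun _ => rfl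

def codingGraph : Set ((ℤ → Fin k) × M) := {p | spine f p.1 = {p.2}}

lemma image_weakHyp_eq_codingGraph {ρ : (ℤ → Fin k) → M}
    (hρ : ∀ θ ∈ weakHyp f, spine f θ = {ρ θ}) :
    (fun ϑ => (ϑ, ρ ϑ)) '' weakHyp f = codingGraph f := by
  ext ⟨θ, x⟩
  constructor
  · rintro ⟨θ, hθ, h⟩
    cases h
    exact hρ θ hθ
  · intro h
    have hρθ := hρ θ ⟨x, h⟩
    rw [h, singleton_eq_singleton_iff] at hρθ
    exact ⟨θ, ⟨x, h⟩, Prod.ext rfl hρθ.symm⟩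

variable [TopologicalSpace M] [CompactSpace M] {f}

lemma isCompact_range_bcomp (hf : ∀ i, Continuous (f i)) (θ : ℤ → Fin k) (n : ℕ) :
    IsCompact (range (bcomp f θ n)) := by
  refine isCompact_range ?_
  induction n with
  | zero => exact continuous_id
  | succ n ih => exact ih.comp (hf _)

variable [T2Space M]

lemma spine_shiftMap (hf : ∀ i, Continuous (f i)) (θ : ℤ → Fin k) :
    spine f (shiftMap θ) = f (θ 0) '' spine f θ := by
  rw [spine_eq_iInter_range_bcomp_succ, spine_eq_iInter_range_bcomp,
    (antitone_range_bcomp f θ).image_iInter_eq_of_isCompact (isCompact_range_bcomp hf θ) (hf _)]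
  simp only [bcomp_shiftMap, range_comp]

lemma mapsTo_skewProd_codingGraph (hf : ∀ i, Continuous (f i)) :
    MapsTo (skewProd f) (codingGraph f) (codingGraph f) := fun p hp => by
  change spine f (shiftMap p.1) = {f (p.1 0) p.2}
  rw [spine_shiftMap hf, hp.out, image_singleton]

lemma exists_range_bcomp_subset (hf : ∀ i, Continuous (f i)) {θ : ℤ → Fin k} {v : Set M}
    (hv : IsOpen v) (h : spine f θ ⊆ v) : ∃ m, range (bcomp f θ m) ⊆ v :=
  exists_subset_nhds_of_isCompact (antitone_range_bcomp f θ).directed_ge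
    (isCompact_range_bcomp hf θ) fun _ hx =>
      hv.mem_nhds (h (spine_eq_iInter_range_bcomp f θ ▸ hx))

theorem tendsto_of_mem_spine (hf : ∀ i, Continuous (f i)) {ι : Type*} {l : Filter ι}
    {θ : ℤ → Fin k} {y : M} (hθ : spine f θ = {y}) {θ' : ι → ℤ → Fin k} {x : ι → M}
    (hθ' : Tendsto θ' l (𝓝 θ)) (hx : ∀ i, x i ∈ spine f (θ' i)) : Tendsto x l (𝓝 y) := by
  refine (nhds_basis_opens y).tendsto_right_iff.2 fun v ⟨hyv, hv⟩ => ?_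
  obtain ⟨m, hm⟩ := exists_range_bcomp_subset hf hv (hθ ▸ singleton_subset_iff.2 hyv)
  have hpast : ∀ᶠ i in l, ∀ j ∈ Finset.range m, θ' i (-((j : ℤ) + 1)) = θ (-((j : ℤ) + 1)) :=
    (eventually_all_finset _).2 fun j _ => by
      simpa only [nhds_discrete, tendsto_pure, comp_apply] using
        ((continuous_apply (-((j : ℤ) + 1))).tendsto θ).comp hθ'
  filter_upwards [hpast] with i hi
  rw [← bcomp_congr_s5 f fun j hj => hi j (Finset.mem_range.2 hj)] at hm
  exact hm (mem_iInter.1 (spine_eq_iInter_range_bcomp f _ ▸ hx i) m)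

theorem isMixingOn_codingGraph (hf : ∀ i, Continuous (f i)) :
    IsMixingOn (skewProd f) (codingGraph f) := by
  rintro U V hU hV ⟨⟨η, y⟩, hηy_U, hη⟩ ⟨⟨θ, x⟩, hθx_V, hθ⟩
  have hspliced : ∀ n, (splice θ η n, x) ∈ codingGraph f := fun n =>
    (spine_congr f fun _ hi => splice_of_neg θ η n hi).trans hθ
  have horbit : ∀ n, (skewProd f)^[n] (splice θ η n, x) ∈ codingGraph f := fun n =>
    (mapsTo_skewProd_codingGraph hf).iterate n (hspliced n)
  have hstart : Tendsto (fun n => (splice θ η n, x)) atTop (𝓝 (θ, x)) :=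
    (tendsto_splice θ η).prodMk_nhds tendsto_const_nhds
  have hend_fst : Tendsto (fun n => ((skewProd f)^[n] (splice θ η n, x)).1) atTop (𝓝 η) := by
    simpa only [(semiconj_fst_skewProd f).iterate_right _ _] using
      tendsto_shiftMap_iterate_splice θ η
  have hend : Tendsto (fun n => (skewProd f)^[n] (splice θ η n, x)) atTop (𝓝 (η, y)) :=
    (Prod.tendsto_iff _ _).2 ⟨hend_fst,
      tendsto_of_mem_spine hf hη hend_fst fun n => (horbit n).out ▸ mem_singleton _⟩
  filter_upwards [hstart.eventually (hV.mem_nhds hθx_V), hend.eventually (hU.mem_nhds hηy_U)]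
    with n hnV hnU
  exact ⟨_, mem_image_of_mem _ ⟨hnV, hspliced n⟩, hnU, horbit n⟩

end Spine

theorem topologically_mixing_on_closure_graph_general
    {k : ℕ} {M : Type*} [MetricSpace M] [CompactSpace M]
    (f : Fin k → M → M) (hf : ∀ i, Continuous (f i))
    (ρ : (ℤ → Fin k) → M) (hρ : ∀ θ ∈ weakHyp f, spine f θ = {ρ θ}) :
    ∀ U V : Set ((ℤ → Fin k) × M), IsOpen U → IsOpen V →
      (U ∩ closure ((fun ϑ => (ϑ, ρ ϑ)) '' weakHyp f)).Nonempty →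
      (V ∩ closure ((fun ϑ => (ϑ, ρ ϑ)) '' weakHyp f)).Nonempty →
      ∃ n₀ : ℕ, ∀ n : ℕ, n₀ ≤ n →
        ((skewProd f)^[n] '' (V ∩ closure ((fun ϑ => (ϑ, ρ ϑ)) '' weakHyp f)) ∩
          (U ∩ closure ((fun ϑ => (ϑ, ρ ϑ)) '' weakHyp f))).Nonempty := by
  rw [image_weakHyp_eq_codingGraph f hρ]
  intro U V hU hV hUne hVne
  exact eventually_atTop.1 ((isMixingOn_codingGraph hf).closure U V hU hV hUne hVne)

/-- If `S_F ≠ ∅`, then `F` is topologically mixing on the closure of the graph of the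
coding map: for every pair of nonempty relatively open subsets `U ∩ C`, `V ∩ C` of
`C = cl (graph ρ)` there is `n₀` such that `Fⁿ(V ∩ C) ∩ (U ∩ C) ≠ ∅` for all `n ≥ n₀`. -/
theorem topologically_mixing_on_closure_graph
    {k : ℕ} (hk : 1 ≤ k) {M : Type*} [MetricSpace M] [CompactSpace M] [Nonempty M]
    (f : Fin k → M → M) (hf : ∀ i, Continuous (f i))
    (hS : (weakHyp f).Nonempty)
    (ρ : (ℤ → Fin k) → M) (hρ : ∀ θ ∈ weakHyp f, spine f θ = {ρ θ}) :
    ∀ U V : Set ((ℤ → Fin k) × M), IsOpen U → IsOpen V →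
      (U ∩ closure ((fun ϑ => (ϑ, ρ ϑ)) '' weakHyp f)).Nonempty →
      (V ∩ closure ((fun ϑ => (ϑ, ρ ϑ)) '' weakHyp f)).Nonempty →
      ∃ n₀ : ℕ, ∀ n : ℕ, n₀ ≤ n →
        ((skewProd f)^[n] '' (V ∩ closure ((fun ϑ => (ϑ, ρ ϑ)) '' weakHyp f)) ∩
          (U ∩ closure ((fun ϑ => (ϑ, ρ ϑ)) '' weakHyp f))).Nonempty :=
  topologically_mixing_on_closure_graph_general f hf ρ hρ
end
end

section
/- Assume ℙ(S_F) = 1. Then the topological support of v_ℙ equals the closure of the graph of the coding map restricted to the support of ℙ: supp v_ℙ = cl{(ϑ, ρ(ϑ)) : ϑ ∈ S_F ∩ supp ℙ}. -/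
open Set Function Filter Topology MeasureTheory

noncomputable section

/-- The topological support of a measure: points all of whose open neighbourhoods have
positive measure. -/
def msupport {X : Type*} [TopologicalSpace X] [MeasurableSpace X] (μ : Measure X) :
    Set X :=
  {z | ∀ U : Set X, IsOpen U → z ∈ U → 0 < μ U}

/-!
The coding map is continuous on `S_F`: the sets `f_{θ₋₁} ∘ ⋯ ∘ f_{θ₋ₙ}(M)` are compact and
decrease to `{ρ θ}`, so one of them lies in a given neighbourhood of `ρ θ`, and it depends only
on the coordinates `θ₋₁, …, θ₋ₙ`. For a finite measure `μ`, a set `s` of full outer measure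
and `g` continuous on `s`, the support of `g_* μ` is the closure of `g (s ∩ supp μ)`: the
preimage of this closure contains the full-measure set `s ∩ supp μ`; conversely, if
`x ∈ s ∩ supp μ` and `g (V ∩ s) ⊆ U` for an open `V ∋ x`, then `μ (g⁻¹ U) ≥ μ (V ∩ s) = μ V > 0`.
-/

theorem msupport_eq_support {X : Type*} [TopologicalSpace X] [MeasurableSpace X]
    (μ : Measure X) : msupport μ = μ.support := by
  rw [Measure.support_eq_forall_isOpen]
  ext x
  exact forall_congr' fun _ => Imp.swap

section SupportMap

variable {X Y : Type*} [TopologicalSpace X] [MeasurableSpace X]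
  [TopologicalSpace Y] [MeasurableSpace Y] [OpensMeasurableSpace Y]
  {μ : Measure X} [IsFiniteMeasure μ] {g : X → Y} {s : Set X}

theorem MeasureTheory.Measure.support_map_subset_closure_image [HereditarilyLindelofSpace X]
    (hg : AEMeasurable g μ) (hs : μ s = μ univ) :
    (μ.map g).support ⊆ closure (g '' (s ∩ μ.support)) := by
  refine Measure.support_subset_of_isClosed isClosed_closure ?_
  have hfull : μ univ ≤ μ (g ⁻¹' closure (g '' (s ∩ μ.support))) :=
    calc μ univ = μ (s ∩ μ.support) :=
          ((measure_inter_conull Measure.measure_compl_support).trans hs).symm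
      _ ≤ μ (g ⁻¹' closure (g '' (s ∩ μ.support))) :=
        measure_mono fun x hx => subset_closure (mem_image_of_mem g hx)
  rw [mem_ae_iff, measure_compl isClosed_closure.measurableSet (measure_ne_top _ _),
    Measure.map_apply_of_aemeasurable hg isClosed_closure.measurableSet,
    Measure.map_apply_of_aemeasurable hg MeasurableSet.univ, preimage_univ]
  exact tsub_eq_zero_of_le hfull

theorem MeasureTheory.Measure.image_subset_support_map [OpensMeasurableSpace X]
    (hg : AEMeasurable g μ) (hs : μ s = μ univ) (hgs : ContinuousOn g s) :
    g '' (s ∩ μ.support) ⊆ (μ.map g).support := by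
  rintro _ ⟨x, ⟨hxs, hx⟩, rfl⟩
  rw [Measure.support_eq_forall_isOpen] at hx ⊢
  intro U hxU hU
  obtain ⟨V, hV, hxV, hVU⟩ := mem_nhdsWithin.1 (hgs x hxs (hU.mem_nhds hxU))
  calc 0 < μ V := hx V hxV hV
    _ = μ (s ∩ V) := by
      rw [Measure.measure_inter_eq_of_measure_eq hV.measurableSet hs (subset_univ s)
        (measure_ne_top μ s), univ_inter]
    _ ≤ μ (g ⁻¹' U) := measure_mono fun y hy => hVU ⟨hy.2, hy.1⟩
    _ = μ.map g U := (Measure.map_apply_of_aemeasurable hg hU.measurableSet).symm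

theorem MeasureTheory.Measure.support_map_eq_closure_image [HereditarilyLindelofSpace X]
    [OpensMeasurableSpace X] (hg : AEMeasurable g μ) (hs : μ s = μ univ)
    (hgs : ContinuousOn g s) :
    (μ.map g).support = closure (g '' (s ∩ μ.support)) :=
  (Measure.support_map_subset_closure_image hg hs).antisymm
    (closure_minimal (Measure.image_subset_support_map hg hs hgs) Measure.isClosed_support)

end SupportMap

section Coding

variable {k : ℕ} {M : Type*} {f : Fin k → M → M}

theorem bcomp_succ_image_subset (θ : ℤ → Fin k) (n : ℕ) :
    bcomp f θ (n + 1) '' univ ⊆ bcomp f θ n '' univ := by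
  rw [bcomp, image_comp]
  exact image_mono (subset_univ _)

theorem eventually_bcomp_eq (θ : ℤ → Fin k) (n : ℕ) :
    ∀ᶠ θ' in 𝓝 θ, bcomp f θ' n = bcomp f θ n := by
  induction n with
  | zero => exact .of_forall fun _ => rfl
  | succ n ih =>
    have hcoord : ∀ᶠ θ' in 𝓝 θ, θ' (-((n : ℤ) + 1)) = θ (-((n : ℤ) + 1)) :=
      ((continuous_apply (-((n : ℤ) + 1)) : Continuous fun θ' : ℤ → Fin k => θ' _).tendsto θ
        |>.eventually_mem (isOpen_discrete {θ _} |>.mem_nhds rfl))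
    filter_upwards [ih, hcoord] with θ' h₁ h₂
    simp only [bcomp, h₁, h₂]

variable [TopologicalSpace M]

theorem continuous_bcomp (hf : ∀ i, Continuous (f i)) (θ : ℤ → Fin k) (n : ℕ) :
    Continuous (bcomp f θ n) := by
  induction n with
  | zero => exact continuous_id
  | succ n ih => exact ih.comp (hf _)

theorem exists_bcomp_image_subset [CompactSpace M] [T2Space M] (hf : ∀ i, Continuous (f i))
    {θ : ℤ → Fin k} {U : Set M} (hU : ∀ x ∈ spine f θ, U ∈ 𝓝 x) :
    ∃ n, bcomp f θ (n + 1) '' univ ⊆ U :=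
  exists_subset_nhds_of_isCompact
    (Antitone.directed_ge (antitone_nat_of_succ_le fun n => bcomp_succ_image_subset θ (n + 1)))
    (fun n => isCompact_univ.image (continuous_bcomp hf θ (n + 1))) hU

theorem continuousOn_coding [CompactSpace M] [T2Space M] (hf : ∀ i, Continuous (f i))
    {ρ : (ℤ → Fin k) → M} (hρ : ∀ θ ∈ weakHyp f, spine f θ = {ρ θ}) :
    ContinuousOn ρ (weakHyp f) := by
  intro θ hθ U hU
  obtain ⟨n, hn⟩ := exists_bcomp_image_subset hf (θ := θ) (U := U)
    (by simpa [hρ θ hθ] using hU)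
  rw [mem_map]
  filter_upwards [nhdsWithin_le_nhds (eventually_bcomp_eq (f := f) θ (n + 1)),
    self_mem_nhdsWithin] with θ' hθ' hθ'W
  have hspine : ρ θ' ∈ spine f θ' := by rw [hρ θ' hθ'W]; rfl
  exact hn (hθ' ▸ iInter_subset _ n hspine)

end Coding

theorem support_attracting_measure_general
    {k : ℕ} {M : Type*} [MetricSpace M] [CompactSpace M]
    [MeasurableSpace M] [BorelSpace M]
    (f : Fin k → M → M) (hf : ∀ i, Continuous (f i))
    (ℙ : Measure (ℤ → Fin k)) [IsProbabilityMeasure ℙ]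
    (hS : ℙ (weakHyp f) = 1)
    (ρ : (ℤ → Fin k) → M) (hρ : ∀ θ ∈ weakHyp f, spine f θ = {ρ θ})
    (hρm : AEMeasurable (fun θ => (θ, ρ θ) : (ℤ → Fin k) → (ℤ → Fin k) × M) ℙ) :
    msupport (Measure.map (fun θ => (θ, ρ θ)) ℙ) =
      closure ((fun θ => (θ, ρ θ)) '' (weakHyp f ∩ msupport ℙ)) := by
  rw [msupport_eq_support, msupport_eq_support]
  exact Measure.support_map_eq_closure_image hρm (by rw [hS, measure_univ])
    (continuousOn_id.prodMk (continuousOn_coding hf hρ))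

/-- If `ℙ(S_F) = 1`, the topological support of `v_ℙ = ρ̂_* ℙ` equals the closure of the
graph of the coding map restricted to the support of `ℙ`. -/
theorem support_attracting_measure
    {k : ℕ} (hk : 1 ≤ k) {M : Type*} [MetricSpace M] [CompactSpace M] [Nonempty M]
    [MeasurableSpace M] [BorelSpace M]
    (f : Fin k → M → M) (hf : ∀ i, Continuous (f i))
    (ℙ : Measure (ℤ → Fin k)) [IsProbabilityMeasure ℙ]
    (hinv : Measure.map shiftMap ℙ = ℙ)
    (hS : ℙ (weakHyp f) = 1)
    (ρ : (ℤ → Fin k) → M) (hρ : ∀ θ ∈ weakHyp f, spine f θ = {ρ θ})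
    (hρm : AEMeasurable (fun θ => (θ, ρ θ) : (ℤ → Fin k) → (ℤ → Fin k) × M) ℙ) :
    msupport (Measure.map (fun θ => (θ, ρ θ)) ℙ) =
      closure ((fun θ => (θ, ρ θ)) '' (weakHyp f ∩ msupport ℙ)) :=
  support_attracting_measure_general f hf ℙ hS ρ hρ hρm
end
end
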